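/- arXiv:2506.00360 — 2 statements merged into one kernel-verified Lean document; each statement's English description precedes it below -/
import Mathlib

section
/- Let n ≥ 2 and suppose T_n tiles S_n, i.e., there exists a subset Y ⊆ S_n such that (T_n, Y) is a tiling of S_n (or a subset X with (X, T_n) a tiling). Then for every partition λ = (λ_1,…,λ_ℓ) of n satisfying ∑_{i=1}^{ℓ} λ_i(λ_i − 2i + 1) ≥ 0, the integer 1 + n(n−1)/2 divides λ_1!·λ_2!·⋯·λ_ℓ!. -/
/-- `(X, Y)` is a tiling of the group `G`: every element of `G` can be written as `x * y`
for a unique pair `(x, y) ∈ X × Y`. -/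
def IsTiling {G : Type*} [Group G] (X Y : Set G) : Prop :=
  ∀ g : G, ∃! p : G × G, p.1 ∈ X ∧ p.2 ∈ Y ∧ p.1 * p.2 = g

/-- `T n`: the identity together with all transpositions in the symmetric group `S_n`. -/
def transpositionsWithId (n : ℕ) : Set (Equiv.Perm (Fin n)) :=
  {1} ∪ {σ : Equiv.Perm (Fin n) | σ.IsSwap}

/-!
Color `Fin n` by a map `w₀` whose fibres have sizes `λ₁, …, λ_ℓ`, and let `S_n` act on colorings
by precomposition. If `(X, T_n)` tiles `S_n` (the case `(T_n, Y)` reduces to this by inversion),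
then counting factorisations `g = x t` shows that
`d w = |T_n| · #{x ∈ X | w₀ ∘ x = w} - #{g | w₀ ∘ g = w}` satisfies `∑_{t ∈ T_n} d (w ∘ t) = 0`
for every coloring `w`, i.e. `d` lies in the kernel of `1 + ∑ τ` on the permutation module of
shape `λ`. Splitting `∑_{i,j} ⟨d, d ∘ (i j)⟩` according to the colors of `i` and `j` and bounding
each off-diagonal block by a sum of squares shows that `∑ τ` is bounded below there by the content
`½ ∑ λ_i (λ_i - 2i + 1) ≥ 0`, so `d = 0`. At `w = w₀` this reads
`|T_n| · #{x ∈ X | w₀ ∘ x = w₀} = |Stab w₀| = ∏ λ_i!`.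
-/

open Finset Equiv
open scoped Nat

namespace IsTiling

variable {G : Type*} [Group G]

theorem inv {X Y : Set G} (h : IsTiling X Y) : IsTiling Y⁻¹ X⁻¹ := by
  intro g
  obtain ⟨⟨x, y⟩, ⟨hx, hy, hxy⟩, huniq⟩ := h g⁻¹
  refine ⟨(y⁻¹, x⁻¹), ⟨by simpa, by simpa, by simp [← mul_inv_rev, hxy]⟩, ?_⟩
  rintro ⟨y', x'⟩ ⟨hy', hx', h'⟩
  have := huniq (x'⁻¹, y'⁻¹) ⟨hx', hy', by simp [← mul_inv_rev, h']⟩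
  simp only [Prod.mk.injEq] at this ⊢
  constructor <;> simp [← this.1, ← this.2]

theorem sum_sum_mul [Fintype G] {X Y : Finset G} (h : IsTiling (X : Set G) Y) {M : Type*}
    [AddCommMonoid M] (f : G → M) : ∑ x ∈ X, ∑ y ∈ Y, f (x * y) = ∑ g, f g := by
  rw [← sum_product']
  refine sum_bij (fun p _ => p.1 * p.2) (fun _ _ => mem_univ _) ?_ ?_ fun _ _ => rfl
  · rintro ⟨x, y⟩ hp ⟨x', y'⟩ hp' hxy
    rw [mem_product] at hp hp'
    obtain ⟨_, -, huniq⟩ := h (x * y)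
    exact (huniq _ ⟨hp.1, hp.2, rfl⟩).trans (huniq _ ⟨hp'.1, hp'.2, hxy.symm⟩).symm
  · intro g _
    obtain ⟨⟨x, y⟩, ⟨hx, hy, hxy⟩, -⟩ := h g
    exact ⟨(x, y), mem_product.2 ⟨hx, hy⟩, hxy⟩

end IsTiling

section Transpositions

variable {α : Type*} [Fintype α] [DecidableEq α]

variable (α) in
def transpositions : Finset (Perm α) :=
  univ.offDiag.image fun p => swap p.1 p.2

theorem mem_transpositions {σ : Perm α} : σ ∈ transpositions α ↔ σ.IsSwap := by
  simp [transpositions, Perm.IsSwap, eq_comm]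

theorem one_notMem_transpositions : (1 : Perm α) ∉ transpositions α := by
  simp [transpositions, swap_eq_one_iff]

theorem inv_eq_self_of_mem_insert_one_transpositions {σ : Perm α}
    (hσ : σ ∈ insert 1 (transpositions α)) : σ⁻¹ = σ := by
  obtain rfl | hσ := mem_insert.1 hσ
  · exact inv_one
  · obtain ⟨_, _, rfl⟩ := mem_image.1 hσ
    exact swap_inv _ _

theorem filter_offDiag_swap_eq {i j : α} (hij : i ≠ j) :
    {p ∈ (univ : Finset α).offDiag | swap p.1 p.2 = swap i j} = {(i, j), (j, i)} := by
  ext ⟨a, b⟩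
  simp only [mem_filter, mem_offDiag, mem_univ, true_and, mem_insert, mem_singleton,
    Prod.mk.injEq]
  constructor
  · rintro ⟨hab, h⟩
    have ha := congr($h a)
    have hb := congr($h b)
    simp only [swap_apply_left, swap_apply_right, swap_apply_def] at ha hb
    grind
  · rintro (⟨rfl, rfl⟩ | ⟨rfl, rfl⟩)
    · exact ⟨hij, rfl⟩
    · exact ⟨hij.symm, swap_comm _ _⟩

theorem sum_sum_swap {M : Type*} [AddCommMonoid M] (F : Perm α → M) :
    ∑ i, ∑ j, F (swap i j) =
      Fintype.card α • F 1 + 2 • ∑ σ ∈ transpositions α, F σ := by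
  rw [← sum_product', ← diag_union_offDiag (univ : Finset α),
    sum_union (disjoint_diag_offDiag _), sum_diag]
  congr 1
  · simp [Perm.one_def]
  rw [Finset.sum_comp, transpositions, smul_sum]
  refine sum_congr rfl fun σ hσ => ?_
  obtain ⟨⟨i, j⟩, hij, rfl⟩ := mem_image.1 hσ
  rw [filter_offDiag_swap_eq (mem_offDiag.1 hij).2.2, card_pair (by simpa [eq_comm] using hij)]

theorem card_transpositions : #(transpositions α) = (Fintype.card α).choose 2 := by
  have h := sum_sum_swap (α := α) fun _ => 1
  simp only [sum_const, card_univ, smul_eq_mul, mul_one] at h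
  rw [Nat.choose_two_right, Nat.mul_sub_one]
  omega

theorem coe_insert_one_transpositions (n : ℕ) :
    (↑(insert 1 (transpositions (Fin n))) : Set (Perm (Fin n))) = transpositionsWithId n := by
  ext σ
  simp [transpositionsWithId, mem_transpositions]

end Transpositions

theorem comp_swap_of_eq {α β : Type*} [DecidableEq α] (w : α → β) {i j : α}
    (h : w i = w j) : w ∘ swap i j = w := by
  simp [comp_swap_eq_update, h]

section Colorings

variable {α κ : Type*} [Fintype α] [DecidableEq κ]

theorem card_fiber_comp_perm (w : α → κ) (g : Perm α) (k : κ) :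
    #{i | (w ∘ g) i = k} = #{i | w i = k} :=
  card_equiv g fun _ => by simp

theorem exists_card_fiber_eq [Fintype κ] (lam : κ → ℕ) (h : ∑ k, lam k = Fintype.card α) :
    ∃ w : α → κ, ∀ k, #{i | w i = k} = lam k := by
  obtain ⟨e⟩ : Nonempty (α ≃ Σ k, Fin (lam k)) := Fintype.card_eq.1 (by simp [h])
  refine ⟨fun i => (e i).1, fun k => ?_⟩
  rw [← Fintype.card_subtype,
    Fintype.card_congr ((e.subtypeEquiv fun _ => Iff.rfl).trans (sigmaSubtype k)),
    Fintype.card_fin]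

variable [DecidableEq α]

theorem filter_update_eq_insert {w : α → κ} {a b : κ} {j : α} (hj : w j = a) (hab : a ≠ b) :
    ({i | Function.update w j b i = b} : Finset α) = insert j ({i | w i = b} : Finset α) := by
  ext i
  by_cases hi : i = j <;> simp_all [Function.update_apply]

theorem card_stabilizer_eq_prod_factorial [Fintype κ] (w : α → κ) :
    #{g : Perm α | w ∘ g = w} = ∏ k, (#{i | w i = k})! := by
  simp only [← Fintype.card_subtype, DomMulAct.stabilizer_card]

theorem card_comp_eq_comp_perm (w₀ w : α → κ) (t : Perm α) :
    #{g : Perm α | w₀ ∘ g = w ∘ t} = #{g : Perm α | w₀ ∘ g = w} :=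
  card_equiv (Equiv.mulRight t⁻¹) fun g => by
    simp [Perm.coe_mul, ← Function.comp_assoc, Perm.inv_def, comp_symm_eq]

end Colorings

theorem sum_sum_eq_sum_add_two_mul_sum_lt {ι M : Type*} [Fintype ι] [LinearOrder ι]
    [Semiring M] {E : ι → ι → M} (hE : ∀ a b, E a b = E b a) :
    ∑ a, ∑ b, E a b = ∑ a, (E a a + 2 * ∑ b ∈ {b | b < a}, E a b) := by
  have hsplit : ∀ a, ∑ b, E a b =
      E a a + ∑ b ∈ {b | b < a}, E a b + ∑ b ∈ {b | a < b}, E a b := by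
    intro a
    have h : ∀ b, E a b = (if a = b then E a b else 0) + (if b < a then E a b else 0) +
        (if a < b then E a b else 0) := fun b => by
      rcases lt_trichotomy a b with h | rfl | h
      · simp [h, h.ne, h.not_gt]
      · simp
      · simp [h, h.ne', h.not_gt]
    rw [sum_congr rfl fun b _ => h b, sum_add_distrib, sum_add_distrib, sum_ite_eq,
      if_pos (mem_univ _), sum_filter, sum_filter]
  have hswap : ∑ a, ∑ b ∈ {b | a < b}, E a b = ∑ a, ∑ b ∈ {b | b < a}, E a b := by
    rw [sum_comm' (t' := univ) (s' := fun b => {a | a < b}) (by simp)]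
    exact sum_congr rfl fun a _ => sum_congr rfl fun b _ => hE b a
  rw [sum_congr rfl fun a _ => hsplit a, sum_add_distrib, sum_add_distrib, hswap,
    sum_add_distrib, ← mul_sum, two_mul, add_assoc]

section SwapCorrelation

variable {α κ R : Type*} [Fintype α] [DecidableEq α] [Fintype κ] [CommRing R]

def autocorrelation (d : (α → κ) → R) (σ : Perm α) : R :=
  ∑ w, d w * d (w ∘ σ)

theorem autocorrelation_one (d : (α → κ) → R) : autocorrelation d 1 = ∑ w, d w ^ 2 := by
  simp [autocorrelation, sq]

variable [DecidableEq κ]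

def colorBlock (d : (α → κ) → R) (a b : κ) : R :=
  ∑ w, ∑ i ∈ {i | w i = a}, ∑ j ∈ {j | w j = b}, d w * d (w ∘ swap i j)

theorem sum_sum_autocorrelation_swap (d : (α → κ) → R) :
    ∑ i, ∑ j, autocorrelation d (swap i j) = ∑ a, ∑ b, colorBlock d a b := by
  have hfib : ∀ w : α → κ, ∀ G : α → α → R,
      ∑ a, ∑ b, ∑ i ∈ {i | w i = a}, ∑ j ∈ {j | w j = b}, G i j =
        ∑ i, ∑ j, G i j := by
    intro w G
    rw [← sum_fiberwise univ w]
    refine sum_congr rfl fun a _ => ?_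
    rw [sum_comm]
    exact sum_congr rfl fun i _ => sum_fiberwise univ w _
  simp only [autocorrelation, colorBlock]
  simp_rw [sum_comm (t := (univ : Finset (α → κ))), hfib]

theorem colorBlock_comm (d : (α → κ) → R) (a b : κ) :
    colorBlock d a b = colorBlock d b a := by
  unfold colorBlock
  refine sum_congr rfl fun w _ => ?_
  rw [sum_comm]
  simp only [swap_comm]

theorem colorBlock_self (d : (α → κ) → R) (a : κ) :
    colorBlock d a a = ∑ w, (#{i | w i = a} : R) ^ 2 * d w ^ 2 := by
  refine sum_congr rfl fun w _ => ?_
  rw [sum_congr rfl fun i hi => sum_congr rfl fun j hj => by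
    rw [comp_swap_of_eq w ((mem_filter.1 hi).2.trans (mem_filter.1 hj).2.symm)]]
  simp only [sum_const, nsmul_eq_mul]
  ring

theorem sum_sum_fiber_update {M : Type*} [AddCommMonoid M] (a b : κ)
    (F : (α → κ) → α → M) :
    ∑ u, ∑ j ∈ {j | u j = b}, F u j =
      ∑ w, ∑ j ∈ {j | w j = a}, F (Function.update w j b) j := by
  simp only [sum_filter]
  rw [sum_comm, sum_comm (s := (univ : Finset (α → κ)))]
  refine sum_congr rfl fun j _ => ?_
  rw [← sum_filter, ← sum_filter]
  refine sum_nbij' (Function.update · j a) (Function.update · j b) ?_ ?_ ?_ ?_ ?_ <;>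
    intro u hu <;> simp only [mem_filter, mem_univ, true_and] at hu <;>
    simp [← hu]

-- Recoloring `j` from `b` to `a` matches the pairs `(u, j)` with `u j = b` with the pairs
-- `(w, j)` with `w j = a`; the cross terms of the square then form the block `(a, b)`.
theorem sum_sq_sum_update (d : (α → κ) → R) {a b : κ} (hab : a ≠ b) :
    ∑ u, (∑ j ∈ {j | u j = b}, d (Function.update u j a)) ^ 2 =
      ∑ w, (#{i | w i = a} : R) * d w ^ 2 + colorBlock d a b := by
  simp only [sq, sum_mul_sum]
  rw [sum_sum_fiber_update a b, colorBlock, ← sum_add_distrib]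
  refine sum_congr rfl fun w _ => ?_
  rw [card_eq_sum_ones, Nat.cast_sum, sum_mul, ← sum_add_distrib]
  refine sum_congr rfl fun j hj => ?_
  have hj : w j = a := (mem_filter.1 hj).2
  rw [filter_update_eq_insert hj hab, sum_insert (by simp [hj, hab])]
  have hw : Function.update (Function.update w j b) j a = w := by
    rw [Function.update_idem, ← hj, Function.update_eq_self]
  rw [hw, Nat.cast_one, one_mul]
  congr 1
  refine sum_congr rfl fun j' hj' => ?_
  have hj' : w j' = b := (mem_filter.1 hj').2
  have hne : j ≠ j' := fun h => hab (hj.symm.trans (h ▸ hj'))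
  rw [comp_swap_eq_update, hj, hj', Function.update_comm hne]

theorem sum_mul_sq_of_card_fiber_eq {d : (α → κ) → R} {a : κ} {m : ℕ}
    (hd : ∀ w, d w ≠ 0 → #{i | w i = a} = m) (f : ℕ → R) :
    ∑ w, f #{i | w i = a} * d w ^ 2 = f m * ∑ w, d w ^ 2 := by
  rw [mul_sum]
  refine sum_congr rfl fun w _ => ?_
  obtain h | h := eq_or_ne (d w) 0
  · simp [h]
  · rw [hd w h]

variable [LinearOrder R] [IsStrictOrderedRing R]

theorem neg_mul_le_colorBlock {d : (α → κ) → R} {a b : κ} {m : ℕ}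
    (hd : ∀ w, d w ≠ 0 → #{i | w i = a} = m) (hab : a ≠ b) :
    -(m * ∑ w, d w ^ 2) ≤ colorBlock d a b := by
  have hsos := sum_sq_sum_update d hab
  rw [sum_mul_sq_of_card_fiber_eq hd Nat.cast] at hsos
  have : 0 ≤ ∑ u, (∑ j ∈ {j | u j = b}, d (Function.update u j a)) ^ 2 :=
    sum_nonneg fun _ _ => sq_nonneg _
  linarith

-- `#{b | b < k}` is the 0-based row index of `k`, so the coefficient is `2 · content + n`.
theorem le_sum_sum_autocorrelation_swap [LinearOrder κ] {d : (α → κ) → R} {lam : κ → ℕ}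
    (hd : ∀ w, d w ≠ 0 → ∀ k, #{i | w i = k} = lam k) :
    (∑ k, (lam k : R) * (lam k - 2 * #{b | b < k})) * ∑ w, d w ^ 2 ≤
      ∑ i, ∑ j, autocorrelation d (swap i j) := by
  rw [sum_sum_autocorrelation_swap, sum_sum_eq_sum_add_two_mul_sum_lt (colorBlock_comm d),
    sum_mul]
  refine sum_le_sum fun a _ => ?_
  have hd' : ∀ w, d w ≠ 0 → #{i | w i = a} = lam a := fun w hw => hd w hw a
  have hdiag : colorBlock d a a = (lam a : R) ^ 2 * ∑ w, d w ^ 2 := by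
    rw [colorBlock_self, sum_mul_sq_of_card_fiber_eq hd' fun k => (k : R) ^ 2]
  have hoff := sum_le_sum fun b (hb : b ∈ ({b | b < a} : Finset κ)) =>
    neg_mul_le_colorBlock hd' (ne_of_gt (mem_filter.1 hb).2)
  rw [sum_const, nsmul_eq_mul] at hoff
  rw [hdiag]
  nlinarith

theorem eq_zero_of_sum_transpositions_eq_zero [LinearOrder κ] {d : (α → κ) → R} {lam : κ → ℕ}
    (hd : ∀ w, d w ≠ 0 → ∀ k, #{i | w i = k} = lam k)
    (hcontent : 0 ≤ ∑ k, (lam k : R) * (lam k - 2 * #{b | b < k} - 1))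
    (htrans : ∀ w, ∑ t ∈ insert 1 (transpositions α), d (w ∘ t) = 0) (w : α → κ) :
    d w = 0 := by
  by_contra hw
  have hsum : ∑ k, (lam k : R) = Fintype.card α := by
    simp_rw [← hd w hw, ← Nat.cast_sum, ← card_eq_sum_card_fiberwise (fun _ _ => mem_univ _),
      card_univ]
  have hT : autocorrelation d 1 + ∑ σ ∈ transpositions α, autocorrelation d σ = 0 := by
    rw [← sum_insert one_notMem_transpositions]
    simp only [autocorrelation]
    rw [sum_comm]
    simp [← mul_sum, htrans]
  have hpair := sum_sum_swap (autocorrelation d)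
  have hspec := le_sum_sum_autocorrelation_swap hd
  rw [autocorrelation_one] at hT hpair
  set S := ∑ w, d w ^ 2
  have hS0 : 0 ≤ S := sum_nonneg fun _ _ => sq_nonneg _
  have hC : ∑ k, (lam k : R) * (lam k - 2 * #{b | b < k}) =
      ∑ k, (lam k : R) * (lam k - 2 * #{b | b < k} - 1) + Fintype.card α := by
    rw [← hsum, ← sum_add_distrib]
    exact sum_congr rfl fun k _ => by ring
  rw [hC] at hspec
  rw [nsmul_eq_mul, nsmul_eq_mul, Nat.cast_ofNat] at hpair
  have hS : S = 0 := by nlinarith [mul_nonneg hcontent hS0]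
  exact hw (pow_eq_zero_iff two_ne_zero |>.1 <|
    (sum_eq_zero_iff_of_nonneg fun _ _ => sq_nonneg _).1 hS w (mem_univ w))

end SwapCorrelation

section TilingDiscrepancy

variable {α κ : Type*} [Fintype α] [DecidableEq α] [DecidableEq κ]

theorem card_comp_eq_sum_card_of_isTiling {X T : Finset (Perm α)}
    (h : IsTiling (X : Set (Perm α)) T) (w₀ w : α → κ) :
    #{g : Perm α | w₀ ∘ g = w} =
      ∑ t ∈ T, #(X.filter fun x : Perm α => w₀ ∘ ⇑x = w ∘ ⇑t⁻¹) := by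
  rw [card_filter, ← h.sum_sum_mul, sum_comm]
  refine sum_congr rfl fun t _ => ?_
  rw [card_filter]
  refine sum_congr rfl fun x _ => ?_
  simp only [Perm.coe_mul, ← Function.comp_assoc, Perm.inv_def, eq_comp_symm]
  congr

def tilingDiscrepancy (X T : Finset (Perm α)) (w₀ w : α → κ) : ℤ :=
  #T * #(X.filter fun x : Perm α => w₀ ∘ ⇑x = w) - #{g : Perm α | w₀ ∘ g = w}

variable {X T : Finset (Perm α)} {w₀ : α → κ}

theorem sum_tilingDiscrepancy_comp_inv (h : IsTiling (X : Set (Perm α)) T) (w : α → κ) :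
    ∑ t ∈ T, tilingDiscrepancy X T w₀ (w ∘ ⇑t⁻¹) = 0 := by
  simp only [tilingDiscrepancy, sum_sub_distrib, ← mul_sum, ← Nat.cast_sum,
    ← card_comp_eq_sum_card_of_isTiling h, card_comp_eq_comp_perm, sum_const,
    smul_eq_mul, Nat.cast_mul, sub_self]

theorem exists_comp_eq_of_tilingDiscrepancy_ne_zero {w : α → κ}
    (h : tilingDiscrepancy X T w₀ w ≠ 0) : ∃ g : Perm α, w₀ ∘ g = w := by
  contrapose! h
  simp [tilingDiscrepancy, filter_false_of_mem, h]

theorem card_dvd_of_tilingDiscrepancy_eq_zero [Fintype κ]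
    (h : tilingDiscrepancy X T w₀ w₀ = 0) :
    #T ∣ ∏ k, (#{i | w₀ i = k})! := by
  rw [← card_stabilizer_eq_prod_factorial]
  exact ⟨_, (Int.natCast_inj.1 (sub_eq_zero.1 h).symm).trans rfl⟩

end TilingDiscrepancy

theorem card_dvd_prod_factorial_of_isTiling {α κ : Type*} [Fintype α] [DecidableEq α]
    [Fintype κ] [DecidableEq κ] [LinearOrder κ] {X : Finset (Perm α)}
    (hX : IsTiling (X : Set (Perm α)) (insert 1 (transpositions α) : Finset (Perm α)))
    {lam : κ → ℕ} {w₀ : α → κ} (hw₀ : ∀ k, #{i | w₀ i = k} = lam k)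
    (hcontent : 0 ≤ ∑ k, (lam k : ℤ) * (lam k - 2 * #{b | b < k} - 1)) :
    1 + (Fintype.card α).choose 2 ∣ ∏ k, (lam k)! := by
  have hzero : tilingDiscrepancy X (insert 1 (transpositions α)) w₀ w₀ = 0 := by
    refine eq_zero_of_sum_transpositions_eq_zero (fun w hw k => ?_) hcontent (fun w => ?_) w₀
    · obtain ⟨g, rfl⟩ := exists_comp_eq_of_tilingDiscrepancy_ne_zero hw
      rw [card_fiber_comp_perm, hw₀]
    · rw [← sum_tilingDiscrepancy_comp_inv hX w]
      exact sum_congr rfl fun t ht => by rw [inv_eq_self_of_mem_insert_one_transpositions ht]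
  simpa [card_insert_of_notMem one_notMem_transpositions, card_transpositions, add_comm, hw₀]
    using card_dvd_of_tilingDiscrepancy_eq_zero hzero

theorem inv_transpositionsWithId (n : ℕ) :
    (transpositionsWithId n)⁻¹ = transpositionsWithId n := by
  ext σ
  rw [Set.mem_inv, ← coe_insert_one_transpositions, mem_coe, mem_coe]
  exact ⟨fun h => inv_inv σ ▸ inv_eq_self_of_mem_insert_one_transpositions h ▸ h,
    fun h => (inv_eq_self_of_mem_insert_one_transpositions h).symm ▸ h⟩

theorem divisibility_of_tiling_general (n : ℕ)
    (htiles : (∃ Y : Set (Equiv.Perm (Fin n)), IsTiling (transpositionsWithId n) Y) ∨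
      (∃ X : Set (Equiv.Perm (Fin n)), IsTiling X (transpositionsWithId n)))
    (l : ℕ) (lam : Fin l → ℕ)
    (hsum : ∑ i, lam i = n)
    (hcontent : 0 ≤ ∑ i : Fin l,
      (lam i : ℤ) * ((lam i : ℤ) - 2 * (((i : ℕ) : ℤ) + 1) + 1)) :
    (1 + n * (n - 1) / 2) ∣ ∏ i : Fin l, (lam i).factorial := by
  classical
  obtain ⟨X, hX⟩ : ∃ X : Set (Perm (Fin n)), IsTiling X (transpositionsWithId n) := by
    refine htiles.elim (fun ⟨Y, hY⟩ => ⟨Y⁻¹, ?_⟩) id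
    simpa [inv_transpositionsWithId] using hY.inv
  obtain ⟨w₀, hw₀⟩ := exists_card_fiber_eq (α := Fin n) lam (by simpa using hsum)
  rw [← Nat.choose_two_right, ← Fintype.card_fin n]
  refine card_dvd_prod_factorial_of_isTiling (X := X.toFinset) ?_ hw₀ ?_
  · rwa [coe_insert_one_transpositions, Set.coe_toFinset]
  · convert hcontent using 3 with i
    rw [filter_gt_eq_Iio, Fin.card_Iio]
    ring

theorem divisibility_of_tiling (n : ℕ) (hn : 2 ≤ n)
    (htiles : (∃ Y : Set (Equiv.Perm (Fin n)), IsTiling (transpositionsWithId n) Y) ∨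
      (∃ X : Set (Equiv.Perm (Fin n)), IsTiling X (transpositionsWithId n)))
    (l : ℕ) (lam : Fin l → ℕ)
    (hmono : ∀ i j : Fin l, i ≤ j → lam j ≤ lam i)
    (hpos : ∀ i, 0 < lam i)
    (hsum : ∑ i, lam i = n)
    (hcontent : 0 ≤ ∑ i : Fin l,
      (lam i : ℤ) * ((lam i : ℤ) - 2 * (((i : ℕ) : ℤ) + 1) + 1)) :
    (1 + n * (n - 1) / 2) ∣ ∏ i : Fin l, (lam i).factorial :=
  divisibility_of_tiling_general n htiles l lam hsum hcontent
end

section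
/- Let n ≥ 2. There exists a subset Y ⊆ S_n such that (T_n, Y) is a tiling of S_n if and only if the graph Σ_n contains an independent set C with |C| · (1 + n(n−1)/2) ≥ n!. (In particular, every independent set C of Σ_n satisfies |C| · (1 + n(n−1)/2) ≤ n!.) -/
/-- `T_n² = {t₁ * t₂ : t₁, t₂ ∈ T_n}`. -/
def Tsq (n : ℕ) : Set (Equiv.Perm (Fin n)) :=
  {g | ∃ t₁ ∈ transpositionsWithId n, ∃ t₂ ∈ transpositionsWithId n, g = t₁ * t₂}

/-- The graph `Σ_n` on `S_n`, where distinct `g, h` are adjacent iff `g * h⁻¹ ∈ T_n²`. -/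
def SigmaGraph (n : ℕ) : SimpleGraph (Equiv.Perm (Fin n)) :=
  SimpleGraph.fromRel (fun g h => g * h⁻¹ ∈ Tsq n)

section Aux

variable {n : ℕ}

lemma swap_eq_swap_of_pair_eq {a b c d : Fin n} (hab : a ≠ b) (hcd : c ≠ d)
    (h : ({a, b} : Finset (Fin n)) = {c, d}) : Equiv.swap a b = Equiv.swap c d := by
  have ha : a ∈ ({c, d} : Finset (Fin n)) := h ▸ by simp
  have hb : b ∈ ({c, d} : Finset (Fin n)) := h ▸ by simp
  simp only [Finset.mem_insert, Finset.mem_singleton] at ha hb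
  rcases ha with rfl | rfl
  · rcases hb with rfl | rfl
    · exact absurd rfl hab
    · rfl
  · rcases hb with rfl | rfl
    · exact Equiv.swap_comm _ _
    · exact absurd rfl hab

lemma card_isSwap (n : ℕ) :
    Nat.card {σ : Equiv.Perm (Fin n) | σ.IsSwap} = n * (n - 1) / 2 := by
  have hbij : Set.BijOn (fun σ : Equiv.Perm (Fin n) => σ.support)
      {σ : Equiv.Perm (Fin n) | σ.IsSwap} {s : Finset (Fin n) | s.card = 2} := by
    refine ⟨fun σ hσ => Equiv.Perm.card_support_eq_two.mpr hσ, ?_, ?_⟩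
    · rintro σ ⟨a, b, hab, rfl⟩ τ ⟨c, d, hcd, rfl⟩ h
      simp only [Equiv.Perm.support_swap hab, Equiv.Perm.support_swap hcd] at h
      exact swap_eq_swap_of_pair_eq hab hcd h
    · rintro s hs
      obtain ⟨a, b, hab, rfl⟩ := Finset.card_eq_two.mp hs
      exact ⟨Equiv.swap a b, ⟨a, b, hab, rfl⟩, Equiv.Perm.support_swap hab⟩
  rw [Nat.card_congr (hbij.equiv _)]
  have h2 : Nat.card {s : Finset (Fin n) | s.card = 2} =
      Fintype.card {s : Finset (Fin n) // s.card = 2} := Nat.card_eq_fintype_card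
  rw [h2, Fintype.card_finset_len, Fintype.card_fin, Nat.choose_two_right]

lemma one_not_isSwap : ¬ (1 : Equiv.Perm (Fin n)).IsSwap := by
  rintro ⟨a, b, hab, h⟩
  have : (1 : Equiv.Perm (Fin n)) a = Equiv.swap a b a := by rw [h]
  simp [Equiv.swap_apply_left] at this
  exact hab this

lemma card_T (n : ℕ) :
    Nat.card (transpositionsWithId n) = 1 + n * (n - 1) / 2 := by
  rw [Nat.card_coe_set_eq, transpositionsWithId,
    Set.ncard_union_eq (by simpa using one_not_isSwap) (Set.toFinite _) (Set.toFinite _),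
    Set.ncard_singleton, ← Nat.card_coe_set_eq, card_isSwap]

lemma T_inv {t : Equiv.Perm (Fin n)} (ht : t ∈ transpositionsWithId n) : t⁻¹ = t := by
  rcases ht with h | ⟨a, b, hab, rfl⟩
  · simp [Set.mem_singleton_iff.mp h]
  · exact Equiv.swap_inv a b

/-- Key uniqueness lemma: if `C` is independent in `Σ_n`, the products `t * c` are distinct. -/
lemma key_unique {C : Set (Equiv.Perm (Fin n))}
    (hC : ∀ a ∈ C, ∀ b ∈ C, ¬ (SigmaGraph n).Adj a b)
    {t₁ t₂ c₁ c₂ : Equiv.Perm (Fin n)}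
    (ht₁ : t₁ ∈ transpositionsWithId n) (ht₂ : t₂ ∈ transpositionsWithId n)
    (hc₁ : c₁ ∈ C) (hc₂ : c₂ ∈ C) (h : t₁ * c₁ = t₂ * c₂) : t₁ = t₂ ∧ c₁ = c₂ := by
  by_cases hc : c₁ = c₂
  · subst hc
    exact ⟨mul_right_cancel h, rfl⟩
  · exfalso
    have e : c₁ * c₂⁻¹ = t₁ * t₂ := by
      have : c₁ * c₂⁻¹ = t₁⁻¹ * t₂ := by
        have := congrArg (fun g => t₁⁻¹ * g * c₂⁻¹) h
        simpa [mul_assoc] using this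
      rw [this, T_inv ht₁]
    exact hC c₁ hc₁ c₂ hc₂ ((SimpleGraph.fromRel_adj _ _ _).mpr
      ⟨hc, Or.inl ⟨t₁, ht₁, t₂, ht₂, e⟩⟩)

lemma card_perm_fin (n : ℕ) : Nat.card (Equiv.Perm (Fin n)) = n.factorial := by
  rw [Nat.card_eq_fintype_card, Fintype.card_perm, Fintype.card_fin]

/-- Upper bound for independent sets. -/
lemma indep_upper (n : ℕ) (C : Set (Equiv.Perm (Fin n)))
    (hC : ∀ a ∈ C, ∀ b ∈ C, ¬ (SigmaGraph n).Adj a b) :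
    C.ncard * (1 + n * (n - 1) / 2) ≤ n.factorial := by
  set f : (transpositionsWithId n) × C → Equiv.Perm (Fin n) :=
    fun p => (p.1 : Equiv.Perm (Fin n)) * (p.2 : Equiv.Perm (Fin n)) with hf
  have hinj : Function.Injective f := by
    rintro ⟨⟨t₁, ht₁⟩, ⟨c₁, hc₁⟩⟩ ⟨⟨t₂, ht₂⟩, ⟨c₂, hc₂⟩⟩ h
    obtain ⟨h1, h2⟩ := key_unique hC ht₁ ht₂ hc₁ hc₂ h
    simp [Prod.ext_iff, h1, h2]
  have := Nat.card_le_card_of_injective f hinj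
  rw [Nat.card_prod, card_perm_fin, card_T, Nat.card_coe_set_eq, mul_comm] at this
  exact this

end Aux

theorem tiling_iff_large_indep_set (n : ℕ) (hn : 2 ≤ n) :
    ((∃ Y : Set (Equiv.Perm (Fin n)), IsTiling (transpositionsWithId n) Y) ↔
      (∃ C : Set (Equiv.Perm (Fin n)),
        (∀ a ∈ C, ∀ b ∈ C, ¬ (SigmaGraph n).Adj a b) ∧
        C.ncard * (1 + n * (n - 1) / 2) ≥ n.factorial)) ∧
    (∀ C : Set (Equiv.Perm (Fin n)),
      (∀ a ∈ C, ∀ b ∈ C, ¬ (SigmaGraph n).Adj a b) →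
      C.ncard * (1 + n * (n - 1) / 2) ≤ n.factorial) := by
  constructor
  · constructor
    · -- tiling → independent set of full size
      rintro ⟨Y, hY⟩
      refine ⟨Y, ?_, ?_⟩
      · -- Y is independent
        have main : ∀ a ∈ Y, ∀ b ∈ Y, a * b⁻¹ ∈ Tsq n → a = b := by
          rintro a ha b hb ⟨t₁, ht₁, t₂, ht₂, he⟩
          have haeq : a = t₁ * (t₂ * b) := by
            have := congrArg (fun g => g * b) he
            simpa [mul_assoc] using this
          have h1 : (t₁⁻¹ * a : Equiv.Perm (Fin n)) = t₂ * b := by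
            rw [haeq]; group
          obtain ⟨p, _, hpu⟩ := hY (t₂ * b)
          have e1 := hpu (t₁⁻¹, a) ⟨by rw [T_inv ht₁]; exact ht₁, ha, h1⟩
          have e2 := hpu (t₂, b) ⟨ht₂, hb, rfl⟩
          have : ((t₁⁻¹, a) : _ × _) = (t₂, b) := e1.trans e2.symm
          exact (Prod.ext_iff.mp this).2
        intro a ha b hb hadj
        rw [SigmaGraph, SimpleGraph.fromRel_adj] at hadj
        obtain ⟨hne, h | h⟩ := hadj
        · exact hne (main a ha b hb h)
        · exact hne (main b hb a ha h).symm
      · -- cardinality bound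
        have hfin : ∀ g : Equiv.Perm (Fin n),
            ((hY g).exists.choose.1 ∈ transpositionsWithId n ∧
             (hY g).exists.choose.2 ∈ Y ∧
             (hY g).exists.choose.1 * (hY g).exists.choose.2 = g) :=
          fun g => (hY g).exists.choose_spec
        set f : Equiv.Perm (Fin n) → (transpositionsWithId n) × Y :=
          fun g => (⟨(hY g).exists.choose.1, (hfin g).1⟩, ⟨(hY g).exists.choose.2, (hfin g).2.1⟩)
          with hfdef
        have hinj : Function.Injective f := by
          intro g g' h
          rw [Prod.ext_iff, Subtype.ext_iff, Subtype.ext_iff] at h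
          calc g = ((f g).1 : Equiv.Perm (Fin n)) * ((f g).2 : Equiv.Perm (Fin n)) :=
                ((hfin g).2.2).symm
            _ = ((f g').1 : Equiv.Perm (Fin n)) * ((f g').2 : Equiv.Perm (Fin n)) :=
                congrArg₂ (· * ·) h.1 h.2
            _ = g' := (hfin g').2.2
        have := Nat.card_le_card_of_injective f hinj
        rw [Nat.card_prod, card_perm_fin, card_T, Nat.card_coe_set_eq, mul_comm] at this
        exact this
    · -- independent set of full size → tiling
      rintro ⟨C, hC, hcard⟩
      refine ⟨C, ?_⟩
      set f : (transpositionsWithId n) × C → Equiv.Perm (Fin n) :=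
        fun p => (p.1 : Equiv.Perm (Fin n)) * (p.2 : Equiv.Perm (Fin n)) with hfdef
      have hinj : Function.Injective f := by
        rintro ⟨⟨t₁, ht₁⟩, ⟨c₁, hc₁⟩⟩ ⟨⟨t₂, ht₂⟩, ⟨c₂, hc₂⟩⟩ h
        obtain ⟨h1, h2⟩ := key_unique hC ht₁ ht₂ hc₁ hc₂ h
        simp [Prod.ext_iff, h1, h2]
      have hcards : Nat.card ((transpositionsWithId n) × C) = Nat.card (Equiv.Perm (Fin n)) := by
        refine le_antisymm (Nat.card_le_card_of_injective f hinj) ?_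
        rw [Nat.card_prod, card_perm_fin, card_T, Nat.card_coe_set_eq, mul_comm]
        exact hcard
      have hbij : Function.Bijective f :=
        (Nat.bijective_iff_injective_and_card f).mpr ⟨hinj, hcards⟩
      intro g
      obtain ⟨⟨⟨t, ht⟩, ⟨c, hc⟩⟩, hfg⟩ := hbij.2 g
      refine ⟨(t, c), ⟨ht, hc, hfg⟩, ?_⟩
      rintro ⟨t', c'⟩ ⟨ht', hc', he⟩
      obtain ⟨h1, h2⟩ := key_unique hC ht' ht hc' hc (he.trans hfg.symm)
      exact Prod.ext h1 h2
  · exact fun C hC => indep_upper n C hC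
end
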